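/- arXiv:2108.07890 — 2 statements merged into one kernel-verified Lean document; each statement's English description precedes it below -/
import Mathlib

section
/- For every integer n ≥ 3, n ≡ 1 (mod 3) if and only if ε_Δ(OP_n) = 1; in particular, for n ≡ 1 (mod 3) there exists a maximal outerplanar graph G of order n and a single edge of G whose duplication yields a triangle decomposable multigraph, while no maximal outerplanar graph of order n is itself triangle decomposable. -/
/-- A triangle on three distinct vertices, as a multiset of edges. -/
def IsTriangle {V : Type*} (t : Multiset (Sym2 V)) : Prop :=
  ∃ a b c : V, a ≠ b ∧ b ≠ c ∧ a ≠ c ∧ t = {s(a, b), s(b, c), s(a, c)}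

/-- A multigraph (multiset of edges) is triangle decomposable if it is a sum of triangles. -/
def TriDecomp {V : Type*} (E : Multiset (Sym2 V)) : Prop :=
  ∃ T : Multiset (Multiset (Sym2 V)), (∀ t ∈ T, IsTriangle t) ∧ T.sum = E

/-- The edge multiset of a simple graph on a finite vertex type. -/
noncomputable def edgeMS {V : Type*} [Fintype V] (G : SimpleGraph V) : Multiset (Sym2 V) :=
  G.edgeSet.toFinite.toFinset.val

/-- `ε_Δ(G)`: the least number of duplicated edges of `G` (a multiset of edges of `G`,
repetitions allowed) whose addition makes the edge multiset triangle decomposable. -/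
noncomputable def epsDelta {V : Type*} [Fintype V] (G : SimpleGraph V) : ℕ :=
  sInf {k | ∃ D : Multiset (Sym2 V), D.card = k ∧ (∀ e ∈ D, e ∈ G.edgeSet) ∧
    TriDecomp (edgeMS G + D)}

/-- The edge set of the simple-clique 2-tree construction on `Fin n`: start with the
triangle on `0,1,2`, and each vertex `k ≥ 3` is attached to the two vertices `a k, b k`. -/
def mopEdges (n : ℕ) (hn : 3 ≤ n) (a b : Fin n → Fin n) : Set (Sym2 (Fin n)) :=
  {e | e = s(⟨0, by omega⟩, ⟨1, by omega⟩) ∨ e = s(⟨1, by omega⟩, ⟨2, by omega⟩) ∨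
       e = s(⟨0, by omega⟩, ⟨2, by omega⟩) ∨
       ∃ k : Fin n, 3 ≤ (k : ℕ) ∧ (e = s(k, a k) ∨ e = s(k, b k))}

/-- `G` is a maximal outerplanar graph (equivalently, a simple-clique 2-tree):
it is built from a triangle by repeatedly adding a new vertex adjacent to exactly the two
endpoints of an existing edge, each edge being used as an attachment edge at most once. -/
def IsMOP {n : ℕ} (G : SimpleGraph (Fin n)) : Prop :=
  ∃ (hn : 3 ≤ n) (a b : Fin n → Fin n),
    (∀ k : Fin n, 3 ≤ (k : ℕ) → (a k : ℕ) < k ∧ (b k : ℕ) < k ∧ a k ≠ b k) ∧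
    (∀ k : Fin n, 3 ≤ (k : ℕ) → s(a k, b k) ∈ mopEdges n hn a b) ∧
    (∀ k l : Fin n, 3 ≤ (k : ℕ) → 3 ≤ (l : ℕ) → k ≠ l → s(a k, b k) ≠ s(a l, b l)) ∧
    G = SimpleGraph.fromEdgeSet (mopEdges n hn a b)

/-- `ε_Δ(OP_n) = min { ε_Δ(G) : G a maximal outerplanar graph of order n }`. -/
noncomputable def epsOP (n : ℕ) : ℕ :=
  sInf {m | ∃ G : SimpleGraph (Fin n), IsMOP G ∧ epsDelta G = m}


/-!
A maximal outerplanar graph of order `n` has `2n - 3` edges, and a triangle decomposable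
multigraph has a multiple of three edges. Every maximal outerplanar graph can be made
decomposable (take its construction triangles and duplicate the edges they share), so
`ε_Δ(G) ≡ -(2n - 3) ≡ n (mod 3)`: hence `ε_Δ(OP_n) = 1` forces `n ≡ 1`, and for `n ≡ 1` no
such graph is decomposable. Conversely, for `n ≡ 1 (mod 3)` attach vertex `3` to `01`, and
then the vertices in blocks `3m+4, 3m+5, 3m+6` to `{3m+1, 3m+2}`, `{3m+1, 3m+4}`,
`{3m+2, 3m+4}`: the six edges of a block form the triangles `(3m+5, 3m+4, 3m+1)` and
`(3m+6, 3m+4, 3m+2)`, and the base triangle `012` together with vertex 3 and a duplicate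
of `01` forms two more.
-/

def triangle {V : Type*} (a b c : V) : Multiset (Sym2 V) := {s(a, b), s(b, c), s(a, c)}

section TriDecomp

variable {V : Type*} {E F : Multiset (Sym2 V)}

theorem TriDecomp.add (hE : TriDecomp E) (hF : TriDecomp F) : TriDecomp (E + F) := by
  obtain ⟨S, hS, rfl⟩ := hE
  obtain ⟨T, hT, rfl⟩ := hF
  exact ⟨S + T, fun t ht => (Multiset.mem_add.mp ht).elim (hS t) (hT t), Multiset.sum_add S T⟩

theorem triDecomp_triangle {a b c : V} (hab : a ≠ b) (hbc : b ≠ c) (hac : a ≠ c) :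
    TriDecomp (triangle a b c) :=
  ⟨{triangle a b c}, by simpa using ⟨a, b, c, hab, hbc, hac, rfl⟩, Multiset.sum_singleton _⟩

theorem TriDecomp.three_dvd_card (h : TriDecomp E) : 3 ∣ Multiset.card E := by
  obtain ⟨T, hT, rfl⟩ := h
  rw [← Multiset.join, Multiset.card_join]
  refine Multiset.dvd_sum fun x hx => ?_
  obtain ⟨t, ht, rfl⟩ := Multiset.mem_map.mp hx
  obtain ⟨a, b, c, -, -, -, rfl⟩ := hT t ht
  rfl

end TriDecomp

section epsDelta

variable {V : Type*} [Fintype V] {G : SimpleGraph V}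

theorem mem_edgeMS {e : Sym2 V} : e ∈ edgeMS G ↔ e ∈ G.edgeSet := by
  simp [edgeMS]

theorem nodup_edgeMS : (edgeMS G).Nodup :=
  Finset.nodup _

theorem epsDelta_le {D : Multiset (Sym2 V)} (hD : ∀ e ∈ D, e ∈ G.edgeSet)
    (h : TriDecomp (edgeMS G + D)) : epsDelta G ≤ Multiset.card D :=
  Nat.sInf_le ⟨D, rfl, hD, h⟩

theorem three_dvd_card_add_epsDelta
    (h : ∃ D : Multiset (Sym2 V), (∀ e ∈ D, e ∈ G.edgeSet) ∧ TriDecomp (edgeMS G + D)) :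
    3 ∣ Multiset.card (edgeMS G) + epsDelta G := by
  obtain ⟨D, hD, hdec⟩ := h
  obtain ⟨D', hcard, -, hdec'⟩ := Nat.sInf_mem (⟨_, D, rfl, hD, hdec⟩ :
    {k | ∃ D : Multiset (Sym2 V), Multiset.card D = k ∧ (∀ e ∈ D, e ∈ G.edgeSet) ∧
      TriDecomp (edgeMS G + D)}.Nonempty)
  rw [epsDelta, ← hcard, ← Multiset.card_add]
  exact hdec'.three_dvd_card

theorem exists_triDecomp_add_of_cover (T : Multiset (Multiset (Sym2 V)))
    (hT : ∀ t ∈ T, IsTriangle t) (hsub : ∀ e ∈ T.sum, e ∈ G.edgeSet)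
    (hcover : ∀ e ∈ G.edgeSet, e ∈ T.sum) :
    ∃ D : Multiset (Sym2 V), (∀ e ∈ D, e ∈ G.edgeSet) ∧ TriDecomp (edgeMS G + D) := by
  classical
  have hle : edgeMS G ≤ T.sum :=
    (Multiset.le_iff_subset nodup_edgeMS).mpr fun e he => hcover e (mem_edgeMS.mp he)
  refine ⟨T.sum - edgeMS G, fun e he => hsub e (Multiset.mem_of_le tsub_le_self he), T, hT, ?_⟩
  rw [add_tsub_cancel_of_le hle]

end epsDelta

section MOP

variable {n : ℕ} (hn : 3 ≤ n) {a b : Fin n → Fin n}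

theorem edgeSet_fromEdgeSet_mopEdges
    (hlt : ∀ k : Fin n, 3 ≤ (k : ℕ) → (a k : ℕ) < k ∧ (b k : ℕ) < k) :
    (SimpleGraph.fromEdgeSet (mopEdges n hn a b)).edgeSet = mopEdges n hn a b := by
  rw [SimpleGraph.edgeSet_fromEdgeSet, sdiff_eq_left, Set.disjoint_left]
  rintro e (rfl | rfl | rfl | ⟨k, hk, rfl | rfl⟩) <;> simp [Fin.ext_iff]
  · exact (hlt k hk).1.ne'
  · exact (hlt k hk).2.ne'

theorem nodup_triangle_add_sum_Ioi
    (hlt : ∀ k : Fin n, 3 ≤ (k : ℕ) → (a k : ℕ) < k ∧ (b k : ℕ) < k ∧ a k ≠ b k) :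
    (triangle ⟨0, by omega⟩ ⟨1, by omega⟩ ⟨2, by omega⟩ +
      ∑ k ∈ Finset.Ioi ⟨2, by omega⟩, {s(k, a k), s(k, b k)}).Nodup := by
  have three_le {k : Fin n} (hk : k ∈ Finset.Ioi ⟨2, by omega⟩) : 3 ≤ (k : ℕ) :=
    Finset.mem_Ioi.mp hk
  refine Multiset.nodup_add.mpr ⟨by simp [triangle, Fin.ext_iff], ?_, ?_⟩
  · refine Multiset.nodup_bind.mpr ⟨fun k hk => ?_, ?_⟩
    · obtain ⟨hak, hbk, hab⟩ := hlt k (three_le hk)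
      simp [Fin.ext_iff] at hab ⊢
      omega
    · refine Multiset.Nodup.pairwise (fun k hk l hl hkl => ?_) (Finset.nodup _)
      obtain ⟨hak, hbk, -⟩ := hlt k (three_le hk)
      obtain ⟨hal, hbl, -⟩ := hlt l (three_le hl)
      simp [Function.onFun, Fin.ext_iff] at hkl ⊢
      omega
  · refine Multiset.disjoint_left.mpr fun he hek => ?_
    obtain ⟨k, hk, hek⟩ := Multiset.mem_sum.mp hek
    have hk3 := three_le hk
    obtain ⟨hak, hbk, -⟩ := hlt k hk3
    simp only [triangle, Multiset.insert_eq_cons, Multiset.mem_cons,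
      Multiset.mem_singleton] at he
    rcases he with rfl | rfl | rfl <;> simp [Fin.ext_iff] at hek <;> omega

theorem edgeMS_fromEdgeSet_mopEdges
    (hlt : ∀ k : Fin n, 3 ≤ (k : ℕ) → (a k : ℕ) < k ∧ (b k : ℕ) < k ∧ a k ≠ b k) :
    edgeMS (SimpleGraph.fromEdgeSet (mopEdges n hn a b)) =
      triangle ⟨0, by omega⟩ ⟨1, by omega⟩ ⟨2, by omega⟩ +
        ∑ k ∈ Finset.Ioi ⟨2, by omega⟩, {s(k, a k), s(k, b k)} := by
  refine (Multiset.Nodup.ext nodup_edgeMS (nodup_triangle_add_sum_Ioi hn hlt)).mpr fun e => ?_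
  rw [mem_edgeMS, edgeSet_fromEdgeSet_mopEdges hn fun k hk => ⟨(hlt k hk).1, (hlt k hk).2.1⟩]
  simp [mopEdges, triangle, Fin.lt_def, Nat.lt_iff_add_one_le]

theorem card_edgeMS_fromEdgeSet_mopEdges
    (hlt : ∀ k : Fin n, 3 ≤ (k : ℕ) → (a k : ℕ) < k ∧ (b k : ℕ) < k ∧ a k ≠ b k) :
    Multiset.card (edgeMS (SimpleGraph.fromEdgeSet (mopEdges n hn a b))) = 2 * n - 3 := by
  rw [edgeMS_fromEdgeSet_mopEdges hn hlt]
  simp [triangle, Fin.card_Ioi]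
  omega

end MOP

namespace IsMOP

variable {n : ℕ} {G : SimpleGraph (Fin n)}

theorem card_edgeMS (hG : IsMOP G) : Multiset.card (edgeMS G) = 2 * n - 3 := by
  obtain ⟨hn, a, b, hlt, -, -, rfl⟩ := hG
  exact card_edgeMS_fromEdgeSet_mopEdges hn hlt

theorem exists_triDecomp_add (hG : IsMOP G) :
    ∃ D : Multiset (Sym2 (Fin n)),
      (∀ e ∈ D, e ∈ G.edgeSet) ∧ TriDecomp (edgeMS G + D) := by
  obtain ⟨hn, a, b, hlt, hattach, -, rfl⟩ := hG
  refine exists_triDecomp_add_of_cover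
    (triangle ⟨0, by omega⟩ ⟨1, by omega⟩ ⟨2, by omega⟩ ::ₘ
      (Finset.Ioi ⟨2, by omega⟩).val.map fun k => triangle k (a k) (b k)) ?_ ?_ ?_
  · simp only [Multiset.mem_cons, Multiset.mem_map, Finset.mem_val]
    rintro t (rfl | ⟨k, hk, rfl⟩)
    · exact ⟨_, _, _, by simp, by simp, by simp, rfl⟩
    · obtain ⟨hak, hbk, hab⟩ := hlt k (Finset.mem_Ioi.mp hk)
      exact ⟨_, _, _, Fin.ne_of_gt hak, hab, Fin.ne_of_gt hbk, rfl⟩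
  · rw [edgeSet_fromEdgeSet_mopEdges hn fun k hk => ⟨(hlt k hk).1, (hlt k hk).2.1⟩,
      Multiset.sum_cons, ← Finset.sum_eq_multiset_sum]
    intro e he
    simp only [Multiset.mem_add, Multiset.mem_sum, triangle, Multiset.insert_eq_cons,
      Multiset.mem_cons, Multiset.mem_singleton] at he
    rcases he with (rfl | rfl | rfl) | ⟨k, hk, rfl | rfl | rfl⟩
    · exact Or.inl rfl
    · exact Or.inr (Or.inl rfl)
    · exact Or.inr (Or.inr (Or.inl rfl))
    · exact Or.inr (Or.inr (Or.inr ⟨k, Finset.mem_Ioi.mp hk, Or.inl rfl⟩))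
    · exact hattach k (Finset.mem_Ioi.mp hk)
    · exact Or.inr (Or.inr (Or.inr ⟨k, Finset.mem_Ioi.mp hk, Or.inr rfl⟩))
  · rw [edgeSet_fromEdgeSet_mopEdges hn fun k hk => ⟨(hlt k hk).1, (hlt k hk).2.1⟩,
      Multiset.sum_cons, ← Finset.sum_eq_multiset_sum]
    rintro e (rfl | rfl | rfl | ⟨k, hk, rfl | rfl⟩)
    iterate 3 exact Multiset.mem_add.mpr (Or.inl (by simp [triangle]))
    all_goals
      refine Multiset.mem_add.mpr (Or.inr (Multiset.mem_sum.mpr ⟨k, Finset.mem_Ioi.mpr hk, ?_⟩))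
      simp [triangle]

theorem three_dvd_add_epsDelta (hG : IsMOP G) : 3 ∣ 2 * n - 3 + epsDelta G := by
  simpa [hG.card_edgeMS] using three_dvd_card_add_epsDelta hG.exists_triDecomp_add

end IsMOP

-- For `k = 3` the truncated subtraction `3 - 4 = 0` attaches vertex 3 to the edge `01`.
def stripLow (k : ℕ) : ℕ := if k % 3 = 1 then k - 3 else k - 4

def stripHigh (k : ℕ) : ℕ := if k % 3 = 2 then k - 1 else k - 2

theorem stripLow_lt_stripHigh {k : ℕ} (hk : 3 ≤ k) : stripLow k < stripHigh k := by
  unfold stripLow stripHigh; split_ifs <;> omega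

theorem stripHigh_lt {k : ℕ} (hk : 3 ≤ k) : stripHigh k < k := by
  unfold stripHigh; split_ifs <;> omega

theorem stripLow_stripHigh_block (m : ℕ) :
    stripLow (3 * m + 4) = 3 * m + 1 ∧ stripHigh (3 * m + 4) = 3 * m + 2 ∧
    stripLow (3 * m + 5) = 3 * m + 1 ∧ stripHigh (3 * m + 5) = 3 * m + 4 ∧
    stripLow (3 * m + 6) = 3 * m + 2 ∧ stripHigh (3 * m + 6) = 3 * m + 4 := by
  unfold stripLow stripHigh; refine ⟨?_, ?_, ?_, ?_, ?_, ?_⟩ <;> split_ifs <;> omega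

-- The attachment edge of `k` is a base edge or an edge of the earlier vertex `stripHigh k`.
theorem stripLow_stripHigh_cases {k : ℕ} (hk : 3 ≤ k) :
    (stripLow k = 0 ∧ stripHigh k = 1) ∨ (stripLow k = 1 ∧ stripHigh k = 2) ∨
      (3 ≤ stripHigh k ∧ (stripLow k = stripLow (stripHigh k) ∨
        stripLow k = stripHigh (stripHigh k))) := by
  unfold stripLow stripHigh; split_ifs <;> omega

theorem strip_attach_injective {k l : ℕ} (hk : 3 ≤ k) (hl : 3 ≤ l)
    (hlow : stripLow k = stripLow l) (hhigh : stripHigh k = stripHigh l) : k = l := by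
  unfold stripLow stripHigh at *; split_ifs at * <;> omega

section Strip

variable (n : ℕ) [NeZero n]

def stripGraph (hn : 3 ≤ n) : SimpleGraph (Fin n) :=
  SimpleGraph.fromEdgeSet
    (mopEdges n hn (fun k => Fin.ofNat n (stripLow k)) (fun k => Fin.ofNat n (stripHigh k)))

def stripEdges (j : ℕ) : Multiset (Sym2 (Fin n)) :=
  {s(Fin.ofNat n j, Fin.ofNat n (stripLow j)), s(Fin.ofNat n j, Fin.ofNat n (stripHigh j))}

variable {n}

theorem Fin.ofNat_eq_mk_of_lt {i : ℕ} (hi : i < n) : Fin.ofNat n i = ⟨i, hi⟩ :=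
  Fin.ext (Nat.mod_eq_of_lt hi)

theorem val_ofNat_stripLow (k : Fin n) (hk : 3 ≤ (k : ℕ)) :
    (Fin.ofNat n (stripLow k) : ℕ) = stripLow k := by
  simp only [Fin.val_ofNat]
  exact Nat.mod_eq_of_lt (((stripLow_lt_stripHigh hk).trans (stripHigh_lt hk)).trans k.isLt)

theorem val_ofNat_stripHigh (k : Fin n) (hk : 3 ≤ (k : ℕ)) :
    (Fin.ofNat n (stripHigh k) : ℕ) = stripHigh k := by
  simp only [Fin.val_ofNat]
  exact Nat.mod_eq_of_lt ((stripHigh_lt hk).trans k.isLt)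

theorem strip_attach_lt (k : Fin n) (hk : 3 ≤ (k : ℕ)) :
    (Fin.ofNat n (stripLow k) : ℕ) < k ∧ (Fin.ofNat n (stripHigh k) : ℕ) < k ∧
      Fin.ofNat n (stripLow k) ≠ Fin.ofNat n (stripHigh k) := by
  rw [val_ofNat_stripLow k hk, val_ofNat_stripHigh k hk, ne_eq, Fin.ext_iff,
    val_ofNat_stripLow k hk, val_ofNat_stripHigh k hk]
  have := stripLow_lt_stripHigh hk
  have := stripHigh_lt hk
  omega

theorem strip_attach_mem_mopEdges (hn : 3 ≤ n) (k : Fin n) (hk : 3 ≤ (k : ℕ)) :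
    s(Fin.ofNat n (stripLow k), Fin.ofNat n (stripHigh k)) ∈
      mopEdges n hn (fun k => Fin.ofNat n (stripLow k)) (fun k => Fin.ofNat n (stripHigh k)) := by
  rcases stripLow_stripHigh_cases hk with ⟨hlow, hhigh⟩ | ⟨hlow, hhigh⟩ | ⟨hl, hlow | hlow⟩
  · left
    rw [hlow, hhigh, Fin.ofNat_eq_mk_of_lt (by omega : 0 < n),
      Fin.ofNat_eq_mk_of_lt (by omega : 1 < n)]
  · right; left
    rw [hlow, hhigh, Fin.ofNat_eq_mk_of_lt (by omega : 1 < n),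
      Fin.ofNat_eq_mk_of_lt (by omega : 2 < n)]
  all_goals
    refine Or.inr (Or.inr (Or.inr ⟨Fin.ofNat n (stripHigh k), ?_, ?_⟩)) <;>
      simp only [val_ofNat_stripHigh k hk, hl, ← hlow, Sym2.eq_swap, true_or, or_true]

theorem strip_attach_ne {k l : Fin n} (hk : 3 ≤ (k : ℕ)) (hl : 3 ≤ (l : ℕ))
    (hkl : k ≠ l) :
    s(Fin.ofNat n (stripLow k), Fin.ofNat n (stripHigh k)) ≠
      s(Fin.ofNat n (stripLow l), Fin.ofNat n (stripHigh l)) := by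
  rw [ne_eq, Sym2.eq_iff, Fin.ext_iff, Fin.ext_iff, Fin.ext_iff, Fin.ext_iff,
    val_ofNat_stripLow k hk, val_ofNat_stripHigh k hk, val_ofNat_stripLow l hl,
    val_ofNat_stripHigh l hl]
  have := stripLow_lt_stripHigh hk
  have := stripLow_lt_stripHigh hl
  rintro (⟨hlow, hhigh⟩ | ⟨hlow, hhigh⟩)
  · exact hkl (Fin.ext (strip_attach_injective hk hl hlow hhigh))
  · omega

theorem isMOP_stripGraph (hn : 3 ≤ n) : IsMOP (stripGraph n hn) :=
  ⟨hn, _, _, strip_attach_lt, strip_attach_mem_mopEdges hn, fun _ _ => strip_attach_ne, rfl⟩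

theorem edgeMS_stripGraph (hn : 3 ≤ n) :
    edgeMS (stripGraph n hn) = triangle (Fin.ofNat n 0) (Fin.ofNat n 1) (Fin.ofNat n 2) +
      ∑ j ∈ Finset.Ico 3 n, stripEdges n j := by
  have hIco : Finset.Ico 3 n = (Finset.Ioi (⟨2, by omega⟩ : Fin n)).map Fin.valEmbedding := by
    rw [Fin.map_valEmbedding_Ioi]
    exact Finset.Ico_add_one_left_eq_Ioo 2 n
  rw [stripGraph, edgeMS_fromEdgeSet_mopEdges hn strip_attach_lt, hIco, Finset.sum_map,
    Fin.ofNat_eq_mk_of_lt (by omega : 0 < n), Fin.ofNat_eq_mk_of_lt (by omega : 1 < n),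
    Fin.ofNat_eq_mk_of_lt (by omega : 2 < n)]
  simp [stripEdges]

theorem sum_stripEdges_block (m : ℕ) :
    ∑ j ∈ Finset.Ico (3 * m + 4) (3 * m + 7), stripEdges n j =
      triangle (Fin.ofNat n (3 * m + 5)) (Fin.ofNat n (3 * m + 4)) (Fin.ofNat n (3 * m + 1)) +
        triangle (Fin.ofNat n (3 * m + 6)) (Fin.ofNat n (3 * m + 4)) (Fin.ofNat n (3 * m + 2)) := by
  obtain ⟨h₁, h₂, h₃, h₄, h₅, h₆⟩ := stripLow_stripHigh_block m
  rw [Finset.sum_Ico_eq_sum_range, show 3 * m + 7 - (3 * m + 4) = 3 by omega]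
  simp only [Finset.sum_range_succ, Finset.sum_range_zero, zero_add, stripEdges, triangle,
    show 3 * m + 4 + 1 = 3 * m + 5 by omega, show 3 * m + 4 + 2 = 3 * m + 6 by omega, add_zero,
    h₁, h₂, h₃, h₄, h₅, h₆]
  simp only [Multiset.insert_eq_cons, ← Multiset.singleton_add]
  abel

theorem triDecomp_triangle_ofNat {i j k : ℕ} (hi : i < n) (hj : j < n) (hk : k < n)
    (hij : i ≠ j) (hjk : j ≠ k) (hik : i ≠ k) :
    TriDecomp (triangle (Fin.ofNat n i) (Fin.ofNat n j) (Fin.ofNat n k)) := by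
  rw [Fin.ofNat_eq_mk_of_lt hi, Fin.ofNat_eq_mk_of_lt hj, Fin.ofNat_eq_mk_of_lt hk]
  exact triDecomp_triangle (by simpa using hij) (by simpa using hjk) (by simpa using hik)

theorem triDecomp_add_sum_stripEdges (m : ℕ) (hm : 3 * m + 4 ≤ n) :
    TriDecomp (triangle (Fin.ofNat n 0) (Fin.ofNat n 1) (Fin.ofNat n 2) +
      {s(Fin.ofNat n 0, Fin.ofNat n 1)} + ∑ j ∈ Finset.Ico 3 (3 * m + 4), stripEdges n j) := by
  induction m with
  | zero =>
    have h : triangle (Fin.ofNat n 0) (Fin.ofNat n 1) (Fin.ofNat n 2) +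
        {s(Fin.ofNat n 0, Fin.ofNat n 1)} + ∑ j ∈ Finset.Ico 3 4, stripEdges n j =
        triangle (Fin.ofNat n 0) (Fin.ofNat n 1) (Fin.ofNat n 2) +
          triangle (Fin.ofNat n 3) (Fin.ofNat n 0) (Fin.ofNat n 1) := by
      rw [show Finset.Ico 3 4 = {3} from Nat.Ico_succ_singleton 3, Finset.sum_singleton]
      simp only [stripEdges, triangle, show stripLow 3 = 0 from rfl, show stripHigh 3 = 1 from rfl,
        Multiset.insert_eq_cons, ← Multiset.singleton_add]
      abel
    rw [h]
    refine (triDecomp_triangle_ofNat ?_ ?_ ?_ ?_ ?_ ?_).add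
      (triDecomp_triangle_ofNat ?_ ?_ ?_ ?_ ?_ ?_) <;> omega
  | succ m ih =>
    rw [show 3 * (m + 1) + 4 = 3 * m + 7 by ring, ← Finset.sum_Ico_consecutive _
      (by omega : 3 ≤ 3 * m + 4) (by omega : 3 * m + 4 ≤ 3 * m + 7), sum_stripEdges_block,
      ← add_assoc]
    refine (ih (by omega)).add ((triDecomp_triangle_ofNat ?_ ?_ ?_ ?_ ?_ ?_).add
      (triDecomp_triangle_ofNat ?_ ?_ ?_ ?_ ?_ ?_)) <;> omega

theorem exists_triDecomp_stripGraph_add_singleton (hn : 3 ≤ n) (hmod : n % 3 = 1) :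
    ∃ e ∈ (stripGraph n hn).edgeSet, TriDecomp (edgeMS (stripGraph n hn) + {e}) := by
  refine ⟨s(Fin.ofNat n 0, Fin.ofNat n 1), ?_, ?_⟩
  · rw [stripGraph, edgeSet_fromEdgeSet_mopEdges hn fun k hk =>
      ⟨(strip_attach_lt k hk).1, (strip_attach_lt k hk).2.1⟩,
      Fin.ofNat_eq_mk_of_lt (by omega : 0 < n), Fin.ofNat_eq_mk_of_lt (by omega : 1 < n)]
    exact Or.inl rfl
  rw [edgeMS_stripGraph hn, add_right_comm]
  have h := triDecomp_add_sum_stripEdges (n := n) (n / 3 - 1) (by omega)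
  rwa [show 3 * (n / 3 - 1) + 4 = n by omega] at h

end Strip

theorem epsOP_le {n : ℕ} {G : SimpleGraph (Fin n)} (hG : IsMOP G) : epsOP n ≤ epsDelta G :=
  Nat.sInf_le ⟨G, hG, rfl⟩

theorem three_dvd_add_epsOP {n : ℕ} (hn : 3 ≤ n) : 3 ∣ 2 * n - 3 + epsOP n := by
  have : NeZero n := ⟨by omega⟩
  obtain ⟨G, hG, hGeps⟩ := Nat.sInf_mem (⟨_, stripGraph n hn, isMOP_stripGraph hn, rfl⟩ :
    {m | ∃ G : SimpleGraph (Fin n), IsMOP G ∧ epsDelta G = m}.Nonempty)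
  rw [epsOP, ← hGeps]
  exact hG.three_dvd_add_epsDelta

/-- For every `n ≥ 3`, `n ≡ 1 (mod 3)` iff `ε_Δ(OP_n) = 1`; in particular, for
`n ≡ 1 (mod 3)` some maximal outerplanar graph of order `n` becomes triangle decomposable
after duplicating a single edge, while no maximal outerplanar graph of order `n` is itself
triangle decomposable. -/
theorem eps_OP_eq_one_iff (n : ℕ) (hn : 3 ≤ n) :
    (n % 3 = 1 ↔ epsOP n = 1) ∧
    (n % 3 = 1 →
      (∃ G : SimpleGraph (Fin n), IsMOP G ∧
        ∃ e ∈ G.edgeSet, TriDecomp (edgeMS G + {e})) ∧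
      (∀ G : SimpleGraph (Fin n), IsMOP G → ¬ TriDecomp (edgeMS G))) := by
  have : NeZero n := ⟨by omega⟩
  have hdvd := three_dvd_add_epsOP hn
  have hstrip (hmod : n % 3 = 1) :
      ∃ G : SimpleGraph (Fin n), IsMOP G ∧ ∃ e ∈ G.edgeSet, TriDecomp (edgeMS G + {e}) :=
    ⟨stripGraph n hn, isMOP_stripGraph hn, exists_triDecomp_stripGraph_add_singleton hn hmod⟩
  have hnot (hmod : n % 3 = 1) (G : SimpleGraph (Fin n)) (hG : IsMOP G) :
      ¬ TriDecomp (edgeMS G) := fun h => by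
    have := h.three_dvd_card
    rw [hG.card_edgeMS] at this
    omega
  refine ⟨⟨fun hmod => ?_, fun h => by rw [h] at hdvd; omega⟩,
    fun hmod => ⟨hstrip hmod, hnot hmod⟩⟩
  obtain ⟨G, hG, e, he, hdec⟩ := hstrip hmod
  have : epsOP n ≤ 1 := (epsOP_le hG).trans
    (by simpa using epsDelta_le (D := {e}) (by simpa using he) hdec)
  omega
end

section
/- For every integer n ≥ 3, Ξ_Δ(OP_n) = n − 3; that is, the maximum over all maximal outerplanar graphs G of order n of the minimum number of duplicated edges needed to make G triangle decomposable equals n − 3. -/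
/-- `Ξ_Δ(OP_n) = max { ε_Δ(G) : G a maximal outerplanar graph of order n }`. -/
noncomputable def xiOP (n : ℕ) : ℕ :=
  sSup {m | ∃ G : SimpleGraph (Fin n), IsMOP G ∧ epsDelta G = m}

/-!
Upper bound: a maximal outerplanar graph arises from a triangle by attaching `n - 3` vertices,
each to the ends of an edge `ab`; duplicating `ab` closes the two new edges into a triangle, so
`n - 3` duplicated edges always suffice.

Lower bound: in the fan (a hub joined to every vertex of a path) every triangle passes through
the hub. Weigh the edges at the hub by `-1` and the others by `2`. Then every triangle weighs `0`,
so a triangle decomposition of `E + D` forces `w(E) + w(D) = 0`, whence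
`|D| ≥ -w(D) = w(E) = 2(n - 2) - (n - 1) = n - 3`.
-/

section Triangles

variable {V : Type*}

theorem TriDecomp.sum_map_eq_zero {E : Multiset (Sym2 V)} (hE : TriDecomp E) (w : Sym2 V → ℤ)
    (hw : ∀ t, IsTriangle t → t ≤ E → (t.map w).sum = 0) : (E.map w).sum = 0 := by
  obtain ⟨T, hT, rfl⟩ := hE
  calc (T.sum.map w).sum = (T.map fun t => (t.map w).sum).sum :=
        map_multiset_sum (Multiset.sumAddMonoidHom.comp (Multiset.mapAddMonoidHom w)) T
    _ = 0 := Multiset.sum_eq_zero fun x hx => by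
        obtain ⟨t, ht, rfl⟩ := Multiset.mem_map.1 hx
        exact hw t (hT t ht) (Multiset.le_sum_of_mem ht)

def hubWeight [DecidableEq V] (v : V) (e : Sym2 V) : ℤ := if v ∈ e then -1 else 2

theorem IsTriangle.sum_map_hubWeight [DecidableEq V] {t : Multiset (Sym2 V)} (ht : IsTriangle t)
    {v : V} (hv : ∃ e ∈ t, v ∈ e) : (t.map (hubWeight v)).sum = 0 := by
  obtain ⟨x, y, z, hxy, hyz, hxz, rfl⟩ := ht
  obtain ⟨e, he, hve⟩ := hv
  simp only [Multiset.insert_eq_cons, Multiset.mem_cons, Multiset.mem_singleton] at he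
  rcases he with rfl | rfl | rfl <;> rcases Sym2.mem_iff.1 hve with rfl | rfl <;>
    simp [hubWeight, hxy, hyz, hxz, hxy.symm, hyz.symm, hxz.symm]

end Triangles

section Weight

variable {V : Type*} [Fintype V] {G : SimpleGraph V}

theorem sum_map_edgeMS_le_card (w : Sym2 V → ℤ) (hw : ∀ e ∈ G.edgeSet, -1 ≤ w e)
    (htri : ∀ t, IsTriangle t → (∀ e ∈ t, e ∈ G.edgeSet) → (t.map w).sum = 0)
    {D : Multiset (Sym2 V)} (hD : ∀ e ∈ D, e ∈ G.edgeSet) (hT : TriDecomp (edgeMS G + D)) :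
    ((edgeMS G).map w).sum ≤ D.card := by
  have hzero := hT.sum_map_eq_zero w fun t ht hle => htri t ht fun e he =>
    (Multiset.mem_add.1 (Multiset.mem_of_le hle he)).elim mem_edgeMS.1 (hD e)
  have hD_ge : (D.map fun _ => (-1 : ℤ)).sum ≤ (D.map w).sum :=
    Multiset.sum_map_le_sum_map _ _ fun e he => hw e (hD e he)
  simp only [Multiset.map_add, Multiset.sum_add, Multiset.map_const', Multiset.sum_replicate,
    smul_neg, nsmul_eq_mul, mul_one] at hzero hD_ge
  linarith

theorem le_epsDelta_of_weight (w : Sym2 V → ℤ) (hw : ∀ e ∈ G.edgeSet, -1 ≤ w e)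
    (htri : ∀ t, IsTriangle t → (∀ e ∈ t, e ∈ G.edgeSet) → (t.map w).sum = 0)
    (hne : ∃ D : Multiset (Sym2 V), (∀ e ∈ D, e ∈ G.edgeSet) ∧ TriDecomp (edgeMS G + D)) :
    ((edgeMS G).map w).sum ≤ epsDelta G := by
  obtain ⟨D, hD, hT⟩ := hne
  obtain ⟨D', hcard, hD', hT'⟩ : epsDelta G ∈ {k | ∃ D : Multiset (Sym2 V), D.card = k ∧
      (∀ e ∈ D, e ∈ G.edgeSet) ∧ TriDecomp (edgeMS G + D)} :=
    Nat.sInf_mem ⟨D.card, D, rfl, hD, hT⟩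
  rw [← hcard]
  exact sum_map_edgeMS_le_card w hw htri hD' hT'

theorem le_epsDelta_of_forall_triangle_hub [DecidableEq V] (v : V)
    (hv : ∀ t, IsTriangle t → (∀ e ∈ t, e ∈ G.edgeSet) → ∃ e ∈ t, v ∈ e)
    (hne : ∃ D : Multiset (Sym2 V), (∀ e ∈ D, e ∈ G.edgeSet) ∧ TriDecomp (edgeMS G + D)) :
    ((edgeMS G).map (hubWeight v)).sum ≤ epsDelta G :=
  le_epsDelta_of_weight _ (fun e _ => by unfold hubWeight; split_ifs <;> norm_num)
    (fun t ht htG => ht.sum_map_hubWeight (hv t ht htG)) hne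

end Weight

section MaximalOuterplanar

variable {n : ℕ}

def baseEdges (hn : 3 ≤ n) : Multiset (Sym2 (Fin n)) :=
  {s(⟨0, by omega⟩, ⟨1, by omega⟩), s(⟨1, by omega⟩, ⟨2, by omega⟩),
    s(⟨0, by omega⟩, ⟨2, by omega⟩)}

def attachedVertices (n : ℕ) : Finset (Fin n) := Finset.univ.filter fun k => 3 ≤ (k : ℕ)

def attachEdges (a b : Fin n → Fin n) (k : Fin n) : Multiset (Sym2 (Fin n)) :=
  {s(k, a k), s(k, b k)}

theorem card_attachedVertices : (attachedVertices n).card = n - 3 := by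
  have : attachedVertices n = (Finset.Ico 3 n).attachFin fun m hm => (Finset.mem_Ico.1 hm).2 := by
    ext k
    simp [attachedVertices, k.isLt]
  rw [this, Finset.card_attachFin, Nat.card_Ico]

theorem mem_attachedVertices {k : Fin n} : k ∈ attachedVertices n ↔ 3 ≤ (k : ℕ) := by
  simp [attachedVertices]

variable (hn : 3 ≤ n) {a b : Fin n → Fin n}

theorem mem_mopEdges_iff {e : Sym2 (Fin n)} :
    e ∈ mopEdges n hn a b ↔
      e ∈ baseEdges hn + (attachedVertices n).val.bind (attachEdges a b) := by
  simp [mopEdges, baseEdges, attachEdges, mem_attachedVertices]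

theorem val_sup_lt_of_mem_baseEdges {e : Sym2 (Fin n)} (he : e ∈ baseEdges hn) :
    (e.sup : ℕ) < 3 := by
  simp only [baseEdges, Multiset.insert_eq_cons, Multiset.mem_cons,
    Multiset.mem_singleton] at he
  rcases he with rfl | rfl | rfl <;> simp

theorem sup_of_mem_attachEdges {k : Fin n} (hak : a k < k) (hbk : b k < k) {e : Sym2 (Fin n)}
    (he : e ∈ attachEdges a b k) : e.sup = k := by
  simp only [attachEdges, Multiset.insert_eq_cons, Multiset.mem_cons,
    Multiset.mem_singleton] at he
  rcases he with rfl | rfl <;> simp [hak.le, hbk.le]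

theorem nodup_baseEdges_add_bind_attachEdges
    (hab : ∀ k : Fin n, 3 ≤ (k : ℕ) → (a k : ℕ) < k ∧ (b k : ℕ) < k ∧ a k ≠ b k) :
    (baseEdges hn + (attachedVertices n).val.bind (attachEdges a b)).Nodup := by
  -- the edges are told apart by their larger endpoint
  have hsup {k} (hk : k ∈ attachedVertices n) {e} (he : e ∈ attachEdges a b k) : e.sup = k :=
    sup_of_mem_attachEdges (hab k (mem_attachedVertices.1 hk)).1
      (hab k (mem_attachedVertices.1 hk)).2.1 he
  refine Multiset.nodup_add.2 ⟨?_, Multiset.nodup_bind.2 ⟨fun k hk => ?_, ?_⟩, ?_⟩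
  · simp [baseEdges, Fin.ext_iff]
  · exact Multiset.nodup_cons.2 ⟨fun h => (hab k (mem_attachedVertices.1 hk)).2.2
      (Sym2.congr_right.1 (Multiset.mem_singleton.1 h)), Multiset.nodup_singleton _⟩
  · exact (attachedVertices n).nodup.pairwise fun k hk l hl hkl =>
      Multiset.disjoint_left.2 fun hek hel => hkl ((hsup hk hek).symm.trans (hsup hl hel))
  · refine Multiset.disjoint_left.2 fun he hbind => ?_
    obtain ⟨k, hk, hek⟩ := Multiset.mem_bind.1 hbind
    have := val_sup_lt_of_mem_baseEdges hn he
    rw [hsup hk hek] at this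
    exact absurd (mem_attachedVertices.1 hk) (by omega)

theorem edgeMS_fromEdgeSet_mopEdges_s3
    (hab : ∀ k : Fin n, 3 ≤ (k : ℕ) → (a k : ℕ) < k ∧ (b k : ℕ) < k ∧ a k ≠ b k) :
    edgeMS (SimpleGraph.fromEdgeSet (mopEdges n hn a b)) =
      baseEdges hn + (attachedVertices n).val.bind (attachEdges a b) := by
  refine (Multiset.Nodup.ext nodup_edgeMS
    (nodup_baseEdges_add_bind_attachEdges hn hab)).2 fun e => ?_
  rw [mem_edgeMS, SimpleGraph.edgeSet_fromEdgeSet, Set.mem_sdiff, mem_mopEdges_iff,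
    and_iff_left_iff_imp, Sym2.mem_diagSet]
  intro he
  rcases Multiset.mem_add.1 he with he | he
  · simp only [baseEdges, Multiset.insert_eq_cons, Multiset.mem_cons,
      Multiset.mem_singleton] at he
    rcases he with rfl | rfl | rfl <;> simp [Fin.ext_iff]
  · obtain ⟨k, hk, hek⟩ := Multiset.mem_bind.1 he
    obtain ⟨hak, hbk, -⟩ := hab k (mem_attachedVertices.1 hk)
    simp only [attachEdges, Multiset.insert_eq_cons, Multiset.mem_cons,
      Multiset.mem_singleton] at hek
    rcases hek with rfl | rfl <;> simp only [Sym2.mk_isDiag_iff, Fin.ext_iff] <;> omega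

end MaximalOuterplanar

section UpperBound

variable {n : ℕ}

theorem isTriangle_baseEdges (hn : 3 ≤ n) : IsTriangle (baseEdges hn) :=
  ⟨_, _, _, by simp [Fin.ext_iff], by simp [Fin.ext_iff], by simp [Fin.ext_iff], rfl⟩

theorem isTriangle_attachEdges_add {a b : Fin n → Fin n} {k : Fin n} (hak : a k < k)
    (hbk : b k < k) (hab : a k ≠ b k) : IsTriangle (attachEdges a b k + {s(a k, b k)}) :=
  ⟨a k, k, b k, hak.ne, hbk.ne', hab, by rw [attachEdges, Sym2.eq_swap (a := k)]; rfl⟩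

theorem exists_triDecomp_of_isMOP {G : SimpleGraph (Fin n)} (hG : IsMOP G) :
    ∃ D : Multiset (Sym2 (Fin n)), D.card = n - 3 ∧ (∀ e ∈ D, e ∈ G.edgeSet) ∧
      TriDecomp (edgeMS G + D) := by
  obtain ⟨hn, a, b, hab, hmem, -, rfl⟩ := hG
  have hk {k} (hk : k ∈ attachedVertices n) := hab k (mem_attachedVertices.1 hk)
  refine ⟨(attachedVertices n).val.map fun k => s(a k, b k), ?_, ?_, ?_⟩
  · rw [Multiset.card_map, ← Finset.card_def, card_attachedVertices]
  · simp only [Multiset.mem_map, forall_exists_index, and_imp, forall_apply_eq_imp_iff₂]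
    intro k hk'
    obtain ⟨-, -, hne⟩ := hk hk'
    exact (SimpleGraph.fromEdgeSet_adj _).2 ⟨hmem k (mem_attachedVertices.1 hk'), hne⟩
  refine ⟨baseEdges hn ::ₘ (attachedVertices n).val.map
    fun k => attachEdges a b k + {s(a k, b k)}, ?_, ?_⟩
  · simp only [Multiset.mem_cons, Multiset.mem_map, forall_eq_or_imp, forall_exists_index,
      and_imp, forall_apply_eq_imp_iff₂]
    exact ⟨isTriangle_baseEdges hn, fun k hk' =>
      isTriangle_attachEdges_add (hk hk').1 (hk hk').2.1 (hk hk').2.2⟩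
  · rw [Multiset.sum_cons, edgeMS_fromEdgeSet_mopEdges_s3 hn hab, add_assoc,
      ← Multiset.bind_singleton (f := fun k => s(a k, b k)), ← Multiset.bind_add]
    rfl

theorem epsDelta_le_of_isMOP {G : SimpleGraph (Fin n)} (hG : IsMOP G) : epsDelta G ≤ n - 3 :=
  Nat.sInf_le (exists_triDecomp_of_isMOP hG)

end UpperBound

section Fan

variable {n : ℕ} (hn : 3 ≤ n)

def fanHub : Fin n := ⟨0, by omega⟩

def fanPrev : Fin n → Fin n := fun k => ⟨k - 1, by omega⟩

/-- The fan: a hub `0` joined to every vertex of the path `1 - 2 - ⋯ - (n-1)`. -/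
def fan : SimpleGraph (Fin n) :=
  SimpleGraph.fromEdgeSet (mopEdges n hn (fun _ => fanHub hn) fanPrev)

theorem fan_attach_lt (k : Fin n) (hk : 3 ≤ (k : ℕ)) :
    (fanHub hn : ℕ) < k ∧ (fanPrev k : ℕ) < k ∧ fanHub hn ≠ fanPrev k := by
  simp only [fanHub, fanPrev, ne_eq, Fin.ext_iff]
  omega

theorem isMOP_fan : IsMOP (fan hn) := by
  refine ⟨hn, fun _ => fanHub hn, fanPrev, fan_attach_lt hn, fun k hk => ?_,
    fun k l hk hl hkl => ?_, rfl⟩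
  · rcases Nat.lt_or_ge (k - 1) 3 with hk3 | hk3
    · refine Or.inr (Or.inr (Or.inl ?_))
      simp only [fanHub, fanPrev, Sym2.eq_iff, Fin.ext_iff, true_and]
      omega
    · exact Or.inr (Or.inr (Or.inr ⟨fanPrev k, hk3, Or.inl Sym2.eq_swap⟩))
  · simp only [fanHub, fanPrev, ne_eq, Sym2.eq_iff, Fin.ext_iff] at hkl ⊢
    omega

theorem fan_adj_of_ne_zero {x y : Fin n} (h : (fan hn).Adj x y) (hx : (x : ℕ) ≠ 0)
    (hy : (y : ℕ) ≠ 0) : (x : ℕ) + 1 = y ∨ (y : ℕ) + 1 = x := by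
  obtain ⟨hxy | hxy | hxy | ⟨k, hk, hxy | hxy⟩, -⟩ :=
    (SimpleGraph.fromEdgeSet_adj _).1 h <;> simp only [fanHub, fanPrev, Sym2.eq_iff, Fin.ext_iff] at hxy <;> omega

theorem hub_mem_of_isTriangle_fan {t : Multiset (Sym2 (Fin n))} (ht : IsTriangle t)
    (htG : ∀ e ∈ t, e ∈ (fan hn).edgeSet) : ∃ e ∈ t, fanHub hn ∈ e := by
  obtain ⟨x, y, z, hxy, hyz, hxz, rfl⟩ := ht
  by_contra! h
  simp only [Multiset.insert_eq_cons, Multiset.mem_cons, Multiset.mem_singleton,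
    forall_eq_or_imp, forall_eq, Sym2.mem_iff, not_or] at h htG
  simp only [fanHub, Fin.ext_iff] at h
  obtain ⟨hxy', hyz', hxz'⟩ := htG
  have := fan_adj_of_ne_zero hn (x := x) (y := y) hxy' (by omega) (by omega)
  have := fan_adj_of_ne_zero hn (x := y) (y := z) hyz' (by omega) (by omega)
  have := fan_adj_of_ne_zero hn (x := x) (y := z) hxz' (by omega) (by omega)
  omega

theorem sum_map_edgeMS_fan_hubWeight :
    ((edgeMS (fan hn)).map (hubWeight (fanHub hn))).sum = (n - 3 : ℕ) := by
  rw [fan, edgeMS_fromEdgeSet_mopEdges_s3 hn (fan_attach_lt hn), Multiset.map_add,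
    Multiset.sum_add, Multiset.map_bind, Multiset.sum_bind]
  have hbase : ((baseEdges hn).map (hubWeight (fanHub hn))).sum = 0 := by
    simp [baseEdges, hubWeight, fanHub, Fin.ext_iff]
  have hattach : ∀ k ∈ (attachedVertices n).val,
      ((attachEdges (fun _ => fanHub hn) fanPrev k).map (hubWeight (fanHub hn))).sum = 1 := by
    intro k hk
    have := mem_attachedVertices.1 hk
    simp only [attachEdges, Multiset.insert_eq_cons, Multiset.map_cons, Multiset.map_singleton,
      Multiset.sum_cons, Multiset.sum_singleton, hubWeight, Sym2.mem_iff, fanHub, fanPrev,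
      Fin.ext_iff, or_true, if_true]
    rw [if_neg (by omega)]
    norm_num
  rw [hbase, Multiset.map_congr rfl hattach, Multiset.map_const', Multiset.sum_replicate,
    ← Finset.card_def, card_attachedVertices]
  simp

theorem epsDelta_fan : epsDelta (fan hn) = n - 3 := by
  refine le_antisymm (epsDelta_le_of_isMOP (isMOP_fan hn)) ?_
  obtain ⟨D, -, hD, hT⟩ := exists_triDecomp_of_isMOP (isMOP_fan hn)
  have := le_epsDelta_of_forall_triangle_hub (fanHub hn)
    (fun t ht htG => hub_mem_of_isTriangle_fan hn ht htG) ⟨D, hD, hT⟩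
  rw [sum_map_edgeMS_fan_hubWeight] at this
  exact_mod_cast this

end Fan

/-- For every `n ≥ 3`, `Ξ_Δ(OP_n) = n - 3`. -/
theorem xi_OP_eq (n : ℕ) (hn : 3 ≤ n) : xiOP n = n - 3 := by
  refine IsGreatest.csSup_eq ⟨⟨fan hn, isMOP_fan hn, epsDelta_fan hn⟩, ?_⟩
  rintro m ⟨G, hG, rfl⟩
  exact epsDelta_le_of_isMOP hG
end
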